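/- arXiv:2103.06760 — 3 statements merged into one kernel-verified Lean document; each statement's English description precedes it below -/
import Mathlib

section
/- Let G be a 2K_2-free graph on n vertices with independence number α(G). Then the set of vertices x with degree d_G(x) ≤ (n − α(G))/2 is an independent set in G. -/
open SimpleGraph

/-- A set of vertices is independent: no two of its members are adjacent. -/
def IsIndepSet {V : Type*} (G : SimpleGraph V) (s : Set V) : Prop :=
  ∀ x ∈ s, ∀ y ∈ s, ¬ G.Adj x y

/-- `G` contains no induced `2K₂`: there are no two disjoint edges with no
edge of `G` between them. -/
def TwoK2Free {V : Type*} (G : SimpleGraph V) : Prop :=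
  ¬ ∃ a b c d : V, G.Adj a b ∧ G.Adj c d ∧ a ≠ c ∧ a ≠ d ∧ b ≠ c ∧ b ≠ d ∧
    ¬ G.Adj a c ∧ ¬ G.Adj a d ∧ ¬ G.Adj b c ∧ ¬ G.Adj b d

/-- The independence number of `G`. -/
noncomputable def indepNum {V : Type*} [Fintype V] (G : SimpleGraph V) : ℕ :=
  sSup {n | ∃ s : Finset V, _root_.IsIndepSet G ↑s ∧ s.card = n}

/-- The number of connected components of a graph. -/
noncomputable def compCount {W : Type*} (H : SimpleGraph W) : ℕ :=
  Nat.card H.ConnectedComponent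

/-- `G` is `t`-tough: whenever removing a vertex set `S` disconnects the rest
into more than one component, `|S| ≥ t · ω(G − S)`. -/
def Tough {V : Type*} [Fintype V] (t : ℝ) (G : SimpleGraph V) : Prop :=
  ∀ S : Finset V,
    1 < compCount (G.induce ((↑S : Set V)ᶜ)) →
    t * compCount (G.induce ((↑S : Set V)ᶜ)) ≤ S.card

/-- An (oriented) `2`-factor of `G`, encoded as a permutation `σ` of the
vertices: each vertex is adjacent to its successor `σ x`, and every cycle of
`σ` has length at least `3`.  The cycles of `σ` are exactly the cycles of the
`2`-factor, with a fixed orientation; the successor of `x` is `σ x` and its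
predecessor is `σ⁻¹ x`. -/
def IsTwoFactor {V : Type*} (G : SimpleGraph V) (σ : Equiv.Perm V) : Prop :=
  ∀ x : V, G.Adj x (σ x) ∧ σ (σ x) ≠ x

/-- The number of components (cycles) of a `2`-factor encoded as a permutation. -/
noncomputable def numCycles {V : Type*} [Fintype V] (σ : Equiv.Perm V) : ℕ :=
  (@Equiv.Perm.cycleType V _ (Classical.decEq V) σ).card

/-- `σ` is a `2`-factor of `G` with the minimum number of components. -/
def IsMinTwoFactor {V : Type*} [Fintype V] (G : SimpleGraph V) (σ : Equiv.Perm V) : Prop :=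
  IsTwoFactor G σ ∧ ∀ τ : Equiv.Perm V, IsTwoFactor G τ → numCycles σ ≤ numCycles τ

/-- An (oriented) `2`-factor of `G − x`, encoded as a permutation of `V`
fixing `x`. -/
def IsTwoFactorAvoiding {V : Type*} (G : SimpleGraph V) (x : V) (σ' : Equiv.Perm V) : Prop :=
  σ' x = x ∧ ∀ y : V, y ≠ x → G.Adj y (σ' y) ∧ σ' (σ' y) ≠ y

/-- `x` is co-absorbable w.r.t. the `2`-factor `σ`: `G − x` has a `2`-factor
with strictly fewer components than `σ`. -/
def CoAbsorbable {V : Type*} [Fintype V] (G : SimpleGraph V) (σ : Equiv.Perm V) (x : V) : Prop :=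
  ∃ σ' : Equiv.Perm V, IsTwoFactorAvoiding G x σ' ∧ numCycles σ' < numCycles σ

/-- `x` is of `A`-type w.r.t. the `2`-factor `σ`: some other cycle of `σ`
contains two consecutive vertices `z`, `σ z` both adjacent to `x`. -/
def AType {V : Type*} (G : SimpleGraph V) (σ : Equiv.Perm V) (x : V) : Prop :=
  ∃ z : V, ¬ σ.SameCycle x z ∧ G.Adj x z ∧ G.Adj x (σ z)

/-- The degree of a vertex. -/
noncomputable def vdeg {V : Type*} (G : SimpleGraph V) (x : V) : ℕ :=
  Nat.card (G.neighborSet x)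

/-!
If two adjacent vertices `x`, `y` both had degree at most `(n - α)/2`, at least `α` vertices
would be adjacent to neither of them. In a `2K₂`-free graph these vertices are pairwise
non-adjacent, so together with `x` they form an independent set of size `α + 1`.
-/

theorem card_le_indepNum {V : Type*} [Fintype V] {G : SimpleGraph V} {s : Finset V}
    (hs : _root_.IsIndepSet G ↑s) : s.card ≤ _root_.indepNum G :=
  le_csSup ⟨Fintype.card V, by rintro m ⟨t, -, rfl⟩; exact t.card_le_univ⟩ ⟨s, hs, rfl⟩

theorem vdeg_eq_degree {V : Type*} [Fintype V] (G : SimpleGraph V) [DecidableRel G.Adj]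
    (x : V) : vdeg G x = G.degree x := by
  rw [vdeg, Nat.card_eq_fintype_card, card_neighborSet_eq_degree]

/-- An edge inside `A` would form an induced `2K₂` with `xy`. -/
theorem TwoK2Free.isIndepSet_insert_of_adj {V : Type*} {G : SimpleGraph V} (hG : TwoK2Free G)
    {x y : V} (hxy : G.Adj x y) {A : Set V} (hA : ∀ a ∈ A, ¬ G.Adj x a ∧ ¬ G.Adj y a) :
    _root_.IsIndepSet G (insert x A) := by
  have hx : x ∉ A := fun hxA => (hA x hxA).2 hxy.symm
  have hy : y ∉ A := fun hyA => (hA y hyA).1 hxy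
  rintro a (rfl | ha) b (rfl | hb) hab
  · exact G.loopless.irrefl _ hab
  · exact (hA b hb).1 hab
  · exact (hA a ha).1 hab.symm
  · exact hG ⟨a, b, x, y, hab, hxy, ne_of_mem_of_not_mem ha hx, ne_of_mem_of_not_mem ha hy,
      ne_of_mem_of_not_mem hb hx, ne_of_mem_of_not_mem hb hy,
      fun h => (hA a ha).1 h.symm, fun h => (hA a ha).2 h.symm,
      fun h => (hA b hb).1 h.symm, fun h => (hA b hb).2 h.symm⟩

theorem stmt1 {V : Type*} [Fintype V] (G : SimpleGraph V) (h : TwoK2Free G) :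
    _root_.IsIndepSet G
      {x : V | (vdeg G x : ℝ) ≤ ((Fintype.card V : ℝ) - (_root_.indepNum G : ℝ)) / 2} := by
  classical
  intro x hx y hy hxy
  simp only [Set.mem_ofPred_eq, vdeg_eq_degree] at hx hy
  set N := G.neighborFinset x ∪ G.neighborFinset y
  have hxN : x ∈ N := by simp [N, hxy.symm]
  have hindep : _root_.IsIndepSet G ↑(insert x Nᶜ) := by
    rw [Finset.coe_insert]
    exact h.isIndepSet_insert_of_adj hxy fun a ha => by simpa [N, not_or] using ha
  have hα : Nᶜ.card + 1 ≤ _root_.indepNum G := by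
    simpa [Finset.card_insert_of_notMem, hxN] using card_le_indepNum hindep
  have hcount : Fintype.card V ≤ Nᶜ.card + G.degree x + G.degree y := by
    have := Finset.card_compl_add_card N
    have : N.card ≤ G.degree x + G.degree y := by
      grw [Finset.card_union_le, card_neighborFinset_eq_degree, card_neighborFinset_eq_degree]
    omega
  have hα' : (Nᶜ.card : ℝ) + 1 ≤ _root_.indepNum G := by exact_mod_cast hα
  have hcount' : (Fintype.card V : ℝ) ≤ Nᶜ.card + G.degree x + G.degree y := by
    exact_mod_cast hcount
  linarith
end

section
/- Let G be a graph containing a 2-factor, and let F be a 2-factor of G with the minimum number of components. If a vertex x of G is co-absorbable (i.e., G − x has a 2-factor with strictly fewer components than F), then d_G(x) ≤ α(G) − 1. -/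
open SimpleGraph

/-! Let `π` be a `2`-factor of `G - x` with fewer cycles than the minimum `2`-factor `σ`. The
set consisting of `x` and the `π`-successors of the neighbours of `x` has `d(x) + 1` elements, and
it is independent: an edge inside it closes a path through `x` whose vertex set is a union of
`π`-cycles (one cycle if the edge is `x π(y)` or joins two successors on the same cycle, two cycles
otherwise), and replacing those cycles by this single cycle gives a `2`-factor of `G` with at most
as many cycles as `π`, contradicting the minimality of `σ`. -/

namespace List

variable {α : Type*}

theorem formPerm_apply_formPerm_apply_ne [DecidableEq α] {l : List α} (hl : l.Nodup)
    (h3 : 3 ≤ l.length) {a : α} (ha : a ∈ l) : l.formPerm (l.formPerm a) ≠ a := by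
  obtain ⟨i, hi, rfl⟩ := getElem_of_mem ha
  rw [← Equiv.Perm.mul_apply, ← sq, formPerm_pow_apply_getElem _ hl, Ne, hl.getElem_inj_iff]
  rcases lt_or_ge (i + 2) l.length with h | h
  · rw [Nat.mod_eq_of_lt h]; omega
  · rw [Nat.mod_eq_sub_mod h, Nat.mod_eq_of_lt (by omega)]; omega

theorem rel_formPerm_of_isChain [DecidableEq α] {r : α → α → Prop} {x : α} {l : List α}
    (hl : (x :: l).Nodup) (h : (x :: (l ++ [x])).IsChain r) :
    ∀ v ∈ x :: l, r v ((x :: l).formPerm v) := by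
  rw [← cons_append, isChain_iff_getElem] at h
  intro v hv
  obtain ⟨i, hi, rfl⟩ := getElem_of_mem hv
  have hc := h i (by simp at hi ⊢; omega)
  rw [getElem_append_left hi] at hc
  rcases lt_or_ge (i + 1) (x :: l).length with h1 | h1
  · rwa [formPerm_apply_lt_getElem _ hl i h1, ← getElem_append_left h1]
  · have hlast : (x :: l)[i] = (x :: l).getLast (cons_ne_nil x l) := by
      rw [getLast_eq_getElem]; congr 1; omega
    rw [getElem_append_right h1] at hc
    rw [hlast, formPerm_apply_getLast, ← hlast]
    simpa [show i + 1 - (x :: l).length = 0 by omega] using hc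

theorem IsChain.reverse_append {r : α → α → Prop} (hr : ∀ {a b}, r a b → r b a) {P Q : List α}
    (hP : P.IsChain r) (hQ : Q.IsChain r) (hPQ : ∀ a ∈ P.head?, ∀ b ∈ Q.head?, r a b) :
    (P.reverse ++ Q).IsChain r := by
  refine isChain_append.mpr ⟨isChain_reverse.mpr (hP.imp fun _ _ => hr), hQ, ?_⟩
  rw [getLast?_reverse]
  exact hPQ

end List

namespace Equiv.Perm

variable {α : Type*} {p : Perm α} {x y : α}

theorem exists_restrict_compl (p : Perm α) (s : Set α) (hs : ∀ v, p v ∈ s ↔ v ∈ s) :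
    ∃ ρ : Perm α, (∀ v ∈ s, ρ v = v) ∧ ∀ v ∉ s, ρ v = p v := by
  classical
  refine ⟨ofSubtype (p.subtypePerm (p := (· ∉ s)) fun v => not_congr (hs v)), fun v hv => ?_,
    fun v hv => ?_⟩
  · exact ofSubtype_apply_of_not_mem (p := (· ∉ s)) _ (not_not.mpr hv)
  · rw [ofSubtype_apply_of_mem (p := (· ∉ s)) _ hv, subtypePerm_apply]

variable [Fintype α] [DecidableEq α]

theorem isChain_toList (p : Perm α) (x : α) : (p.toList x).IsChain (fun a b => p a = b) := by
  rw [List.isChain_iff_getElem]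
  intro i hi
  rw [getElem_toList, getElem_toList, pow_succ', mul_apply]

theorem head?_toList (hx : x ∈ p.support) : (p.toList x).head? = some x := by
  rw [List.head?_eq_getElem?, List.getElem?_eq_getElem (length_toList_pos_of_mem_support p x hx),
    toList_getElem_zero _ _ hx]

theorem getLast?_toList_apply (hy : p y ∈ p.support) :
    (p.toList (p y)).getLast? = some y := by
  obtain ⟨l, hl⟩ : ∃ l, p.toList (p y) = p y :: l :=
    ⟨_, List.eq_cons_of_mem_head? (head?_toList hy)⟩
  have hlast := List.formPerm_apply_getLast (p y) l
  have hform : (p y :: l).formPerm = p.cycleOf (p y) := hl ▸ formPerm_toList p (p y)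
  have hmem : p.SameCycle (p y) ((p y :: l).getLast (List.cons_ne_nil _ l)) :=
    (mem_toList_iff.mp (by rw [hl]; exact List.getLast_mem _)).1
  rw [hform, hmem.cycleOf_apply] at hlast
  rw [hl, List.getLast?_eq_some_getLast (List.cons_ne_nil _ l), p.injective hlast]

theorem apply_mem_toList_iff : p y ∈ p.toList x ↔ y ∈ p.toList x := by
  simp only [mem_toList_iff, sameCycle_apply_right]

theorem card_cycleType_lt_of_restrict_compl {ρ : Perm α} {s : Set α} (hin : ∀ v ∈ s, ρ v = v)
    (hout : ∀ v ∉ s, ρ v = p v) (hmove : ∃ v ∈ s, p v ≠ v) :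
    Multiset.card ρ.cycleType < Multiset.card p.cycleType := by
  have hdisj : (p * ρ⁻¹).Disjoint ρ := by
    intro v
    by_cases hv : v ∈ s
    · exact Or.inr (hin v hv)
    · left
      obtain ⟨u, rfl⟩ := ρ.surjective v
      have hu : u ∉ s := fun hu => hv (by rwa [hin u hu])
      rw [mul_apply, show ρ⁻¹ (ρ u) = u from ρ.symm_apply_apply u, hout u hu]
  have hne : p * ρ⁻¹ ≠ 1 := by
    obtain ⟨v, hv, hpv⟩ := hmove
    have hρv : ρ⁻¹ v = v := by rw [inv_eq_iff_eq, hin v hv]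
    intro h
    apply hpv
    simpa only [mul_apply, hρv, one_apply] using congrArg (· v) h
  have := card_cycleType_pos.mpr hne
  rw [← inv_mul_cancel_right p ρ, hdisj.cycleType_mul, Multiset.card_add]
  omega

end Equiv.Perm

theorem vdeg_eq_card_neighborFinset {V : Type*} (G : SimpleGraph V) (x : V)
    [Fintype (G.neighborSet x)] : vdeg G x = (G.neighborFinset x).card := by
  rw [vdeg, Nat.card_eq_fintype_card, SimpleGraph.card_neighborFinset_eq_degree,
    SimpleGraph.card_neighborSet_eq_degree]

open Equiv Equiv.Perm

theorem numCycles_eq_card_cycleType {V : Type*} [Fintype V] [DecidableEq V] (σ : Perm V) :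
    numCycles σ = Multiset.card σ.cycleType := by
  rw [numCycles, Subsingleton.elim (Classical.decEq V)]

namespace IsTwoFactorAvoiding

variable {V : Type*} {G : SimpleGraph V} {π : Perm V} {x : V}

theorem apply_ne_self (hπ : IsTwoFactorAvoiding G x π) {v : V} (hv : v ≠ x) : π v ≠ v :=
  fun h => (hπ.2 v hv).2 (by rw [h, h])

theorem apply_eq_iff (hπ : IsTwoFactorAvoiding G x π) {v : V} : π v = x ↔ v = x := by
  conv_lhs => rw [← hπ.1]
  exact π.injective.eq_iff

variable [DecidableEq V]

theorem isTwoFactor_formPerm_mul (hπ : IsTwoFactorAvoiding G x π) {l : List V} {ρ : Perm V}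
    (hnd : (x :: l).Nodup) (hlen : 3 ≤ (x :: l).length) (hcyc : (x :: (l ++ [x])).IsChain G.Adj)
    (hinv : ∀ v, π v ∈ l ↔ v ∈ l) (hρin : ∀ v ∈ x :: l, ρ v = v) (hρout : ∀ v ∉ l, ρ v = π v) :
    IsTwoFactor G ((x :: l).formPerm * ρ) := by
  set c := x :: l with hc
  have hτ_on : ∀ v ∈ c, (c.formPerm * ρ) v = c.formPerm v := fun v hv => by
    rw [mul_apply, hρin v hv]
  have hπ_off : ∀ v ∉ c, π v ∉ c := by
    intro v hv
    simpa [hc, hπ.apply_eq_iff, hinv] using hv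
  have hτ_off : ∀ v ∉ c, (c.formPerm * ρ) v = π v := fun v hv => by
    rw [mul_apply, hρout v fun h => hv (List.mem_cons_of_mem x h),
      List.formPerm_apply_of_notMem (hπ_off v hv)]
  intro v
  by_cases hv : v ∈ c
  · rw [hτ_on v hv, hτ_on _ (List.formPerm_apply_mem_of_mem hv)]
    exact ⟨List.rel_formPerm_of_isChain hnd hcyc v hv,
      List.formPerm_apply_formPerm_apply_ne hnd hlen hv⟩
  · rw [hτ_off v hv, hτ_off _ (hπ_off v hv)]
    exact hπ.2 v fun h => hv (h ▸ List.mem_cons_self)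

variable [Fintype V]

theorem apply_mem_support (hπ : IsTwoFactorAvoiding G x π) {v : V} (hv : v ≠ x) :
    π v ∈ π.support :=
  mem_support.mpr (hπ.apply_ne_self (hπ.apply_eq_iff.not.mpr hv))

theorem notMem_toList (hπ : IsTwoFactorAvoiding G x π) (w : V) : x ∉ π.toList w := by
  rw [mem_toList_iff]
  rintro ⟨hwx, hw⟩
  exact mem_support.mp (hwx.mem_support_iff.mp hw) hπ.1

theorem isChain_toList (hπ : IsTwoFactorAvoiding G x π) (w : V) :
    (π.toList w).IsChain G.Adj := by
  refine (List.IsChain.iff_mem.mp (Perm.isChain_toList π w)).imp ?_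
  rintro a _ ⟨ha, -, rfl⟩
  exact (hπ.2 a fun h => hπ.notMem_toList w (h ▸ ha)).1

/-- The new `2`-factor consists of the cycle `x :: l` and the cycles of `π` off `l`: it trades the
cycles of `π` inside `l` (at least one) for a single cycle. -/
theorem exists_isTwoFactor_of_path (hπ : IsTwoFactorAvoiding G x π) {l : List V} {a b : V}
    (hnd : l.Nodup) (hxl : x ∉ l) (hinv : ∀ v, π v ∈ l ↔ v ∈ l) (hl : l.IsChain G.Adj)
    (ha : l.head? = some a) (hb : l.getLast? = some b) (hxa : G.Adj x a) (hxb : G.Adj x b) :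
    ∃ τ : Perm V, IsTwoFactor G τ ∧ numCycles τ ≤ numCycles π := by
  obtain ⟨ρ, hρin, hρout⟩ := exists_restrict_compl π {v | v ∈ l} hinv
  have hcnd : (x :: l).Nodup := List.nodup_cons.mpr ⟨hxl, hnd⟩
  have hal : a ∈ l := List.mem_of_mem_head? ha
  have hpa : π a ≠ a := hπ.apply_ne_self hxa.ne'
  have hlen : 3 ≤ (x :: l).length := by
    have hsub : ({a, π a} : Finset V) ⊆ l.toFinset := by
      simp [Finset.insert_subset_iff, hal, (hinv a).mpr hal]
    have := Finset.card_le_card hsub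
    rw [Finset.card_pair hpa.symm, List.toFinset_card_of_nodup hnd] at this
    simp only [List.length_cons]
    omega
  have hcyc : (x :: (l ++ [x])).IsChain G.Adj := by
    refine List.isChain_cons.mpr ⟨?_, List.isChain_append.mpr ⟨hl, List.isChain_singleton _, ?_⟩⟩
    · simpa [List.head?_append, ha] using hxa
    · simpa [hb] using hxb.symm
  have hρc : ∀ v ∈ x :: l, ρ v = v := by
    intro v hv
    rcases List.mem_cons.mp hv with rfl | hv
    · rw [hρout v hxl, hπ.1]
    · exact hρin v hv
  refine ⟨_, hπ.isTwoFactor_formPerm_mul hcnd hlen hcyc hinv hρc hρout, ?_⟩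
  have hdisj : (x :: l).formPerm.Disjoint ρ := fun v => by
    by_cases hv : v ∈ x :: l
    · exact Or.inr (hρc v hv)
    · exact Or.inl (List.formPerm_apply_of_notMem hv)
  have hlt := card_cycleType_lt_of_restrict_compl hρin hρout ⟨a, hal, hpa⟩
  rw [numCycles_eq_card_cycleType, numCycles_eq_card_cycleType, hdisj.cycleType_mul,
    (List.isCycle_formPerm hcnd (by omega)).cycleType]
  simp only [Multiset.card_add, Multiset.card_singleton]
  omega

theorem exists_isTwoFactor_of_reverse_append (hπ : IsTwoFactorAvoiding G x π) {P Q : List V}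
    {y z : V} (hnd : (P ++ Q).Nodup) (hx : x ∉ P ++ Q) (hinv : ∀ v, π v ∈ P ++ Q ↔ v ∈ P ++ Q)
    (hP : P.IsChain G.Adj) (hQ : Q.IsChain G.Adj) (hPQ : ∀ a ∈ P.head?, ∀ b ∈ Q.head?, G.Adj a b)
    (hPy : P.getLast? = some y) (hQz : Q.getLast? = some z) (hy : G.Adj x y) (hz : G.Adj x z) :
    ∃ τ : Perm V, IsTwoFactor G τ ∧ numCycles τ ≤ numCycles π := by
  have hperm : (P.reverse ++ Q).Perm (P ++ Q) := (List.reverse_perm P).append_right Q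
  refine hπ.exists_isTwoFactor_of_path (hperm.nodup_iff.mpr hnd) (hperm.mem_iff.not.mpr hx)
    (fun v => by rw [hperm.mem_iff, hperm.mem_iff, hinv]) (hP.reverse_append (·.symm) hQ hPQ)
    ?_ ?_ hy hz
  · rw [List.head?_append, List.head?_reverse, hPy, Option.some_or]
  · rw [List.getLast?_append, hQz, Option.some_or]

theorem exists_isTwoFactor_of_adj_apply (hπ : IsTwoFactorAvoiding G x π) {y : V}
    (hy : G.Adj x y) (hy' : G.Adj x (π y)) :
    ∃ τ : Perm V, IsTwoFactor G τ ∧ numCycles τ ≤ numCycles π := by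
  have hw := hπ.apply_mem_support hy.ne'
  exact hπ.exists_isTwoFactor_of_path (nodup_toList π _) (hπ.notMem_toList _)
    (fun _ => apply_mem_toList_iff) (hπ.isChain_toList _) (head?_toList hw)
    (getLast?_toList_apply hw) hy' hy

theorem exists_isTwoFactor_of_not_sameCycle (hπ : IsTwoFactorAvoiding G x π) {y z : V}
    (hy : G.Adj x y) (hz : G.Adj x z) (hyz : ¬ π.SameCycle y z) (hadj : G.Adj (π y) (π z)) :
    ∃ τ : Perm V, IsTwoFactor G τ ∧ numCycles τ ≤ numCycles π := by
  have hwy := hπ.apply_mem_support hy.ne'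
  have hwz := hπ.apply_mem_support hz.ne'
  refine hπ.exists_isTwoFactor_of_reverse_append (P := π.toList (π y)) (Q := π.toList (π z))
    ?_ ?_ ?_ (hπ.isChain_toList _) (hπ.isChain_toList _) ?_ (getLast?_toList_apply hwy)
    (getLast?_toList_apply hwz) hy hz
  · refine List.nodup_append.mpr ⟨nodup_toList π _, nodup_toList π _, ?_⟩
    rintro a ha b hb rfl
    exact hyz (sameCycle_apply_left.mp (sameCycle_apply_right.mp
      ((mem_toList_iff.mp ha).1.trans (mem_toList_iff.mp hb).1.symm)))
  · simp [hπ.notMem_toList]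
  · simp [apply_mem_toList_iff]
  · simpa [head?_toList hwy, head?_toList hwz] using hadj

/-- Splitting the cycle `π y, …, z, π z, …, y` of `π` after `z`, the new cycle is
`x, y, …, π z, π y, …, z`. -/
theorem exists_isTwoFactor_of_sameCycle (hπ : IsTwoFactorAvoiding G x π) {y z : V}
    (hy : G.Adj x y) (hz : G.Adj x z) (hyz : y ≠ z) (hsc : π.SameCycle y z)
    (hadj : G.Adj (π y) (π z)) :
    ∃ τ : Perm V, IsTwoFactor G τ ∧ numCycles τ ≤ numCycles π := by
  have hw := hπ.apply_mem_support hy.ne'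
  obtain ⟨s, t, hst⟩ := List.append_of_mem
    (mem_toList_iff.mpr ⟨sameCycle_apply_left.mpr hsc, hw⟩ : z ∈ π.toList (π y))
  rw [← List.singleton_append, ← List.append_assoc] at hst
  have hhead := head?_toList hw
  have hlast := getLast?_toList_apply hw
  have hchain := Perm.isChain_toList π (π y)
  rw [hst] at hhead hlast hchain
  have ht : t ≠ [] := by
    rintro rfl
    simp only [List.append_nil, List.getLast?_append, List.getLast?_singleton, Option.some_or,
      Option.some_inj] at hlast
    exact hyz hlast.symm
  have hperm : (t ++ (s ++ [z])).Perm (π.toList (π y)) := hst ▸ List.perm_append_comm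
  refine hπ.exists_isTwoFactor_of_reverse_append (y := y) (z := z)
    (hperm.nodup_iff.mpr (nodup_toList π _)) (hperm.mem_iff.not.mpr (hπ.notMem_toList _))
    (fun v => by rw [hperm.mem_iff, hperm.mem_iff, apply_mem_toList_iff])
    ((hπ.isChain_toList _).infix (hst ▸ (List.suffix_append _ t).isInfix))
    ((hπ.isChain_toList _).infix (hst ▸ (List.prefix_append _ t).isInfix)) ?_ ?_ (by simp) hy hz
  · intro a ha b hb
    rw [Option.mem_def] at hb
    rw [List.head?_append, hb, Option.some_or, Option.some_inj] at hhead
    have hza : π z = a := (List.isChain_append.mp hchain).2.2 z (by simp) a ha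
    rw [← hza, hhead]
    exact hadj.symm
  · rwa [List.getLast?_append_of_ne_nil _ ht] at hlast

theorem isIndepSet_insert_image_neighborFinset [DecidableRel G.Adj]
    (hπ : IsTwoFactorAvoiding G x π)
    (hmin : ¬ ∃ τ : Perm V, IsTwoFactor G τ ∧ numCycles τ ≤ numCycles π) :
    _root_.IsIndepSet G ↑(insert x ((G.neighborFinset x).image π)) := by
  intro u hu v hv huv
  simp only [Finset.coe_insert, Finset.coe_image, Set.mem_insert_iff, Set.mem_image,
    Finset.mem_coe, SimpleGraph.mem_neighborFinset] at hu hv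
  rcases hu with rfl | ⟨a, ha, rfl⟩ <;> rcases hv with rfl | ⟨b, hb, rfl⟩
  · exact huv.ne rfl
  · exact hmin (hπ.exists_isTwoFactor_of_adj_apply hb huv)
  · exact hmin (hπ.exists_isTwoFactor_of_adj_apply ha huv.symm)
  · have hab : a ≠ b := by
      rintro rfl
      exact huv.ne rfl
    by_cases hsc : π.SameCycle a b
    · exact hmin (hπ.exists_isTwoFactor_of_sameCycle ha hb hab hsc huv)
    · exact hmin (hπ.exists_isTwoFactor_of_not_sameCycle ha hb hsc huv)

end IsTwoFactorAvoiding

theorem stmt2 {V : Type*} [Fintype V] (G : SimpleGraph V) (σ : Equiv.Perm V)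
    (hσ : IsMinTwoFactor G σ) (x : V) (hx : CoAbsorbable G σ x) :
    vdeg G x + 1 ≤ _root_.indepNum G := by
  classical
  obtain ⟨π, hπ, hlt⟩ := hx
  have hx_notMem : x ∉ (G.neighborFinset x).image π := by
    simp only [Finset.mem_image, SimpleGraph.mem_neighborFinset, hπ.apply_eq_iff, not_exists,
      not_and]
    exact fun a ha hax => ha.ne' hax
  have hindep := hπ.isIndepSet_insert_image_neighborFinset fun ⟨τ, hτ, hle⟩ =>
    (hlt.trans_le (hσ.2 τ hτ)).not_ge hle
  have hcard := card_le_indepNum hindep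
  rwa [Finset.card_insert_of_notMem hx_notMem, Finset.card_image_of_injective _ π.injective,
    ← vdeg_eq_card_neighborFinset] at hcard
end

section
/- Let G be a 2K_2-free graph with a minimum-component 2-factor F having at least two cycles. Let C be a cycle of F and xy an edge of C such that both x and y are of B-type. Then every other cycle D of F alternates between vertices adjacent to {x,y} and vertices not adjacent to {x,y}; that is, for every edge uv of D, exactly one of u, v has a neighbor in {x, y}. -/
open SimpleGraph

/-! If both `u` and `σ u` see `{x, σ x}`, then either `x` or `σ x` sees two consecutive
vertices of the cycle `D` through `u` (it would be of `A`-type), or there are two crossing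
chords between `C` and `D`; exchanging them (after reversing `C` if the chords are parallel)
splices `C` and `D` into a single cycle, against the minimality of `σ`. If neither sees
`{x, σ x}`, the edges `x σx` and `u σu` form an induced `2K₂`. -/

open Equiv Equiv.Perm

section CycleCounting

variable {V : Type*}

theorem Equiv.Perm.sameCycle_self_apply (σ : Perm V) (w : V) : σ.SameCycle w (σ w) :=
  ⟨1, by simp⟩

theorem Equiv.Perm.ne_of_not_sameCycle {σ : Perm V} {a b c d : V} (hab : ¬ σ.SameCycle a b)
    (hc : σ.SameCycle a c) (hd : σ.SameCycle b d) : c ≠ d := by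
  rintro rfl
  exact hab (hc.trans hd.symm)

theorem Equiv.Perm.SameCycle.of_forall_sameCycle_apply {σ τ : Perm V}
    (h : ∀ w, τ.SameCycle w (σ w)) {a b : V} (hab : σ.SameCycle a b) : τ.SameCycle a b := by
  obtain ⟨i, rfl⟩ := hab
  induction i using Int.induction_on with
  | zero => exact SameCycle.refl _ _
  | succ i ih =>
    rw [add_comm, zpow_one_add, mul_apply]
    exact ih.trans (h _)
  | pred i ih =>
    rw [sub_eq_neg_add, zpow_add, zpow_neg_one, mul_apply]
    exact ih.trans (by simpa using (h (σ⁻¹ ((σ ^ (-(i : ℤ))) a))).symm)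

theorem Equiv.Perm.SameCycle.of_eqOn_orbit [Finite V] {ρ τ : Perm V} {a b : V}
    (hab : ρ.SameCycle a b) (h : ∀ c, ρ.SameCycle a c → c ≠ b → τ c = ρ c) :
    τ.SameCycle a b := by
  by_contra hτ
  obtain ⟨n, rfl⟩ := hab.exists_nat_pow_eq
  suffices ∀ k : ℕ, τ.SameCycle a ((ρ ^ k) a) from hτ (this n)
  intro k
  induction k with
  | zero => exact SameCycle.refl _ _
  | succ k ih =>
    have hne : (ρ ^ k) a ≠ (ρ ^ n) a := fun he => hτ (he ▸ ih)
    rw [pow_succ', mul_apply, ← h _ ⟨k, by simp⟩ hne]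
    exact ih.trans (sameCycle_self_apply _ _)

theorem Equiv.Perm.sameCycle_mul_swap [Finite V] [DecidableEq V] {π : Perm V} {a b : V}
    (hab : ¬ π.SameCycle a b) : (π * swap a b).SameCycle a b := by
  have hb : (π * swap a b).SameCycle (π b) b := by
    refine SameCycle.of_eqOn_orbit (sameCycle_self_apply π b).symm fun c hc hcb => ?_
    have hca : c ≠ a := fun hca => hab (hca ▸ sameCycle_apply_left.1 hc).symm
    rw [mul_apply, swap_apply_of_ne_of_ne hca hcb]
  have ha : (π * swap a b) a = π b := by rw [mul_apply, swap_apply_left]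
  exact (ha ▸ sameCycle_self_apply _ a).trans hb

theorem Equiv.Perm.sameCycle_mul_swap_apply [Finite V] [DecidableEq V] {π : Perm V} {a b : V}
    (hab : ¬ π.SameCycle a b) (w : V) : (π * swap a b).SameCycle w (π w) := by
  have hab' := sameCycle_mul_swap hab
  by_cases hwa : w = a
  · subst hwa
    have : (π * swap w b) b = π w := by rw [mul_apply, swap_apply_right]
    exact this ▸ hab'.trans (sameCycle_self_apply _ b)
  by_cases hwb : w = b
  · subst hwb
    have : (π * swap a w) a = π w := by rw [mul_apply, swap_apply_left]
    exact this ▸ hab'.symm.trans (sameCycle_self_apply _ a)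
  have : (π * swap a b) w = π w := by rw [mul_apply, swap_apply_of_ne_of_ne hwa hwb]
  exact this ▸ sameCycle_self_apply _ w

open Classical in
noncomputable def reverseCycle (σ : Perm V) (x : V) : Perm V where
  toFun w := if σ.SameCycle x w then σ⁻¹ w else σ w
  invFun w := if σ.SameCycle x w then σ w else σ⁻¹ w
  left_inv w := by by_cases h : σ.SameCycle x w <;> simp [h]
  right_inv w := by by_cases h : σ.SameCycle x w <;> simp [h]

theorem reverseCycle_apply_of_sameCycle {σ : Perm V} {x w : V} (h : σ.SameCycle x w) :
    reverseCycle σ x w = σ⁻¹ w := by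
  classical
  exact if_pos h

theorem reverseCycle_apply_of_not_sameCycle {σ : Perm V} {x w : V} (h : ¬ σ.SameCycle x w) :
    reverseCycle σ x w = σ w := by
  classical
  exact if_neg h

theorem sameCycle_reverseCycle_apply (σ : Perm V) (x w : V) :
    (reverseCycle σ x).SameCycle w (σ w) := by
  by_cases h : σ.SameCycle x w
  · have h' := (sameCycle_self_apply (reverseCycle σ x) (σ w)).symm
    simpa [reverseCycle_apply_of_sameCycle (sameCycle_apply_right.2 h)] using h'
  · exact reverseCycle_apply_of_not_sameCycle h ▸ sameCycle_self_apply _ w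

theorem sameCycle_apply_reverseCycle (σ : Perm V) (x w : V) :
    σ.SameCycle w (reverseCycle σ x w) := by
  by_cases h : σ.SameCycle x w
  · exact reverseCycle_apply_of_sameCycle h ▸ sameCycle_symm_apply_right.2 (SameCycle.refl σ w)
  · exact reverseCycle_apply_of_not_sameCycle h ▸ sameCycle_self_apply σ w

theorem sameCycle_reverseCycle {σ : Perm V} {x a b : V} :
    (reverseCycle σ x).SameCycle a b ↔ σ.SameCycle a b :=
  ⟨SameCycle.of_forall_sameCycle_apply (sameCycle_apply_reverseCycle σ x),
    SameCycle.of_forall_sameCycle_apply (sameCycle_reverseCycle_apply σ x)⟩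

def sameCycleCoarsening {σ τ : Perm V} (h : ∀ w, τ.SameCycle w (σ w)) :
    Quotient (SameCycle.setoid σ) → Quotient (SameCycle.setoid τ) :=
  Quotient.map' id fun _ _ => SameCycle.of_forall_sameCycle_apply h

theorem sameCycleCoarsening_surjective {σ τ : Perm V} (h : ∀ w, τ.SameCycle w (σ w)) :
    Function.Surjective (sameCycleCoarsening h) :=
  fun q => q.inductionOn fun a => ⟨⟦a⟧, rfl⟩

variable [Fintype V]

theorem numCycles_eq_card_quotient {σ : Perm V} (hσ : ∀ w, σ w ≠ w) :
    numCycles σ = Nat.card (Quotient (SameCycle.setoid σ)) := by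
  let := Classical.decEq V
  have hsupp : ∀ w, w ∈ σ.support := fun w => mem_support.2 (hσ w)
  let φ : Quotient (SameCycle.setoid σ) → σ.cycleFactorsFinset :=
    Quotient.lift (fun w => ⟨σ.cycleOf w, cycleOf_mem_cycleFactorsFinset_iff.2 (hsupp w)⟩)
      fun _ _ h => Subtype.ext h.cycleOf_eq
  have hφ : Function.Bijective φ := by
    constructor
    · refine fun p q => Quotient.inductionOn₂ p q fun a b he => Quotient.sound ?_
      by_contra hab
      have h := cycleOf_apply_of_not_sameCycle hab
      rw [show σ.cycleOf a = σ.cycleOf b from congrArg Subtype.val he, cycleOf_apply_self] at h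
      exact hσ b h
    · rintro ⟨c, hc⟩
      obtain ⟨a, ha, -⟩ := (mem_cycleFactorsFinset_iff.1 hc).1
      exact ⟨⟦a⟧, Subtype.ext (cycle_is_cycleOf (mem_support.2 ha) hc).symm⟩
  rw [Nat.card_eq_of_bijective φ hφ, Nat.card_eq_finsetCard, numCycles, cycleType_def,
    Multiset.card_map]
  rfl

theorem numCycles_le_of_sameCycle_apply {σ τ : Perm V} (hσ : ∀ w, σ w ≠ w)
    (hτ : ∀ w, τ w ≠ w) (h : ∀ w, τ.SameCycle w (σ w)) : numCycles τ ≤ numCycles σ := by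
  classical
  rw [numCycles_eq_card_quotient hσ, numCycles_eq_card_quotient hτ, Nat.card_eq_fintype_card,
    Nat.card_eq_fintype_card]
  exact Fintype.card_le_of_surjective _ (sameCycleCoarsening_surjective h)

theorem numCycles_lt_of_sameCycle_apply {σ τ : Perm V} (hσ : ∀ w, σ w ≠ w)
    (hτ : ∀ w, τ w ≠ w) (h : ∀ w, τ.SameCycle w (σ w)) {a b : V} (hτab : τ.SameCycle a b)
    (hσab : ¬ σ.SameCycle a b) : numCycles τ < numCycles σ := by
  classical
  rw [numCycles_eq_card_quotient hσ, numCycles_eq_card_quotient hτ, Nat.card_eq_fintype_card,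
    Nat.card_eq_fintype_card]
  refine Fintype.card_lt_of_surjective_not_injective _ (sameCycleCoarsening_surjective h)
    fun hinj => hσab (Quotient.exact (@hinj ⟦a⟧ ⟦b⟧ (Quotient.sound hτab)))

theorem numCycles_mul_swap_lt [DecidableEq V] {π : Perm V} (hπ : ∀ w, π w ≠ w) {a b : V}
    (hab : ¬ π.SameCycle a b) (hτ : ∀ w, (π * swap a b) w ≠ w) :
    numCycles (π * swap a b) < numCycles π :=
  numCycles_lt_of_sameCycle_apply hπ hτ (sameCycle_mul_swap_apply hab) (sameCycle_mul_swap hab) hab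

end CycleCounting

section TwoFactor

variable {V : Type*} {G : SimpleGraph V}

theorem IsTwoFactor.apply_ne {σ : Perm V} (h : IsTwoFactor G σ) (w : V) : σ w ≠ w :=
  (h w).1.ne'

theorem IsTwoFactor.mul_swap [DecidableEq V] {π : Perm V} (hπ : IsTwoFactor G π) {a b : V}
    (hab : ¬ π.SameCycle a b) (ha : G.Adj a (π b)) (hb : G.Adj b (π a)) :
    IsTwoFactor G (π * swap a b) := by
  have hτa : (π * swap a b) a = π b := by rw [mul_apply, swap_apply_left]
  have hτb : (π * swap a b) b = π a := by rw [mul_apply, swap_apply_right]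
  have hτ : ∀ w, w ≠ a → w ≠ b → (π * swap a b) w = π w := fun w hwa hwb => by
    rw [mul_apply, swap_apply_of_ne_of_ne hwa hwb]
  have hπa := sameCycle_self_apply π a
  have hπb := sameCycle_self_apply π b
  intro w
  by_cases hwa : w = a
  · subst hwa
    refine ⟨hτa ▸ ha, ?_⟩
    rw [hτa, hτ (π b) (ne_of_not_sameCycle hab .rfl hπb).symm (hπ.apply_ne b)]
    exact (ne_of_not_sameCycle hab .rfl (hπb.trans (sameCycle_self_apply π _))).symm
  by_cases hwb : w = b
  · subst hwb
    refine ⟨hτb ▸ hb, ?_⟩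
    rw [hτb, hτ (π a) (hπ.apply_ne a) (ne_of_not_sameCycle hab hπa .rfl)]
    exact ne_of_not_sameCycle hab (hπa.trans (sameCycle_self_apply π _)) .rfl
  refine ⟨hτ w hwa hwb ▸ (hπ w).1, ?_⟩
  rw [hτ w hwa hwb]
  by_cases hpa : π w = a
  · rw [hpa, hτa]
    exact (ne_of_not_sameCycle hab (hpa ▸ sameCycle_self_apply π w).symm hπb).symm
  by_cases hpb : π w = b
  · rw [hpb, hτb]
    exact ne_of_not_sameCycle hab hπa (hpb ▸ sameCycle_self_apply π w).symm
  rw [hτ (π w) hpa hpb]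
  exact (hπ w).2

theorem IsTwoFactor.reverseCycle {σ : Perm V} (h : IsTwoFactor G σ) (x : V) :
    IsTwoFactor G (reverseCycle σ x) := by
  intro w
  by_cases hw : σ.SameCycle x w
  · have hw' : σ.SameCycle x (σ⁻¹ w) := sameCycle_symm_apply_right.2 hw
    rw [reverseCycle_apply_of_sameCycle hw, reverseCycle_apply_of_sameCycle hw']
    refine ⟨by simpa using (h (σ⁻¹ w)).1.symm, ?_⟩
    simpa using (h (σ⁻¹ (σ⁻¹ w))).2.symm
  · have hw' : ¬ σ.SameCycle x (σ w) := fun h' => hw (sameCycle_apply_right.1 h')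
    rw [reverseCycle_apply_of_not_sameCycle hw, reverseCycle_apply_of_not_sameCycle hw']
    exact h w

variable [Fintype V]

theorem IsMinTwoFactor.reverseCycle {σ : Perm V} (h : IsMinTwoFactor G σ) (x : V) :
    IsMinTwoFactor G (reverseCycle σ x) :=
  ⟨h.1.reverseCycle x, fun τ hτ => (numCycles_le_of_sameCycle_apply h.1.apply_ne
    (h.1.reverseCycle x).apply_ne (sameCycle_reverseCycle_apply σ x)).trans (h.2 τ hτ)⟩

/-- Two crossing chords `a σb`, `b σa` between different cycles would let the swap of `a`
and `b` merge the two cycles. -/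
theorem IsMinTwoFactor.not_adj_apply {σ : Perm V} (h : IsMinTwoFactor G σ) {a b : V}
    (hab : ¬ σ.SameCycle a b) (ha : G.Adj a (σ b)) : ¬ G.Adj b (σ a) := by
  classical
  intro hb
  have hτ := h.1.mul_swap hab ha hb
  exact (h.2 _ hτ).not_gt (numCycles_mul_swap_lt h.1.apply_ne hab hτ.apply_ne)

end TwoFactor

theorem stmt9_general {V : Type*} [Fintype V] (G : SimpleGraph V) (h2 : TwoK2Free G)
    (σ : Equiv.Perm V) (hσ : IsMinTwoFactor G σ)
    (x : V) (hx : ¬ AType G σ x) (hy : ¬ AType G σ (σ x)) :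
    ∀ u : V, ¬ σ.SameCycle x u →
      ((G.Adj u x ∨ G.Adj u (σ x)) ↔ ¬ (G.Adj (σ u) x ∨ G.Adj (σ u) (σ x))) := by
  intro u hu
  have hxσx := sameCycle_self_apply σ x
  have huσu := sameCycle_self_apply σ u
  have hσxu : ¬ σ.SameCycle (σ x) u := fun h => hu (hxσx.trans h)
  constructor
  · rintro (hux | huy) (hvx | hvy)
    · exact hx ⟨u, hu, hux.symm, hvx.symm⟩
    · -- after reversing the cycle of `x`, the chords `ux` and `σx σu` cross
      have hrev := hσ.reverseCycle x
      refine hrev.not_adj_apply (a := σ x) (fun h => hσxu (sameCycle_reverseCycle.1 h)) ?_ ?_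
      · exact reverseCycle_apply_of_not_sameCycle hu ▸ hvy.symm
      · simpa [reverseCycle_apply_of_sameCycle hxσx] using hux
    · exact hσ.not_adj_apply hu hvx.symm huy
    · exact hy ⟨u, hσxu, huy.symm, hvy.symm⟩
  · intro hv
    by_contra hu'
    exact h2 ⟨x, σ x, u, σ u, (hσ.1 x).1, (hσ.1 u).1,
      ne_of_not_sameCycle hu .rfl .rfl, ne_of_not_sameCycle hu .rfl huσu,
      ne_of_not_sameCycle hu hxσx .rfl, ne_of_not_sameCycle hu hxσx huσu,
      fun h => hu' (.inl h.symm), fun h => hv (.inl h.symm),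
      fun h => hu' (.inr h.symm), fun h => hv (.inr h.symm)⟩

theorem stmt9 {V : Type*} [Fintype V] (G : SimpleGraph V) (h2 : TwoK2Free G)
    (σ : Equiv.Perm V) (hσ : IsMinTwoFactor G σ) (hcyc : 1 < numCycles σ)
    (x : V) (hx : ¬ AType G σ x) (hy : ¬ AType G σ (σ x)) :
    ∀ u : V, ¬ σ.SameCycle x u →
      ((G.Adj u x ∨ G.Adj u (σ x)) ↔ ¬ (G.Adj (σ u) x ∨ G.Adj (σ u) (σ x))) :=
  stmt9_general G h2 σ hσ x hx hy
end
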